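/- arXiv:2506.20620 — 2 statements merged into one kernel-verified Lean document; each statement's English description precedes it below -/
import Mathlib

section
/- There exists a uniformly computable sequence ⟨f_e : e ∈ ℕ⟩ of functions from ℕ to ℕ such that every Seq*(TS¹)-solution H to ⟨f_e⟩ computes a function g : ℕ → ℕ that is not dominated by any total computable function; in particular, every Seq*(TS¹)-solution to ⟨f_e⟩ is of hyperimmune degree. (This is the computability-theoretic core of the result that Seq*(TS¹) implies OPT.) -/
namespace IterJump

open scoped Classical

/-- `RecIn g f` : the partial function `f` is partial recursive relative to the
total oracle `g : ℕ → ℕ`.  This mirrors `Nat.Partrec` with an extra `oracle` clause. -/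
inductive RecIn (g : ℕ → ℕ) : (ℕ →. ℕ) → Prop
  | zero : RecIn g (pure 0)
  | succ : RecIn g Nat.succ
  | left : RecIn g fun n => (Nat.unpair n).1
  | right : RecIn g fun n => (Nat.unpair n).2
  | oracle : RecIn g fun n => Part.some (g n)
  | pair {f h : ℕ →. ℕ} : RecIn g f → RecIn g h →
      RecIn g fun n => Nat.pair <$> f n <*> h n
  | comp {f h : ℕ →. ℕ} : RecIn g f → RecIn g h →
      RecIn g fun n => h n >>= f
  | prec {f h : ℕ →. ℕ} : RecIn g f → RecIn g h →
      RecIn g (Nat.unpaired fun a n =>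
        n.rec (f a) fun y IH => do
          let i ← IH
          h (Nat.pair a (Nat.pair y i)))
  | rfind {f : ℕ →. ℕ} : RecIn g f →
      RecIn g fun a => Nat.rfind fun n => (fun m => m = 0) <$> f (Nat.pair a n)

/-- Codes for oracle machines: `Nat.Partrec.Code` with an extra `oracle` constructor. -/
inductive OCode : Type
  | zero : OCode
  | succ : OCode
  | left : OCode
  | right : OCode
  | oracle : OCode
  | pair : OCode → OCode → OCode
  | comp : OCode → OCode → OCode
  | prec : OCode → OCode → OCode
  | rfind' : OCode → OCode

/-- Evaluation of an oracle code relative to the total oracle `g`. -/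
def OCode.eval (g : ℕ → ℕ) : OCode → ℕ →. ℕ
  | OCode.zero => pure 0
  | OCode.succ => fun n => Part.some (n + 1)
  | OCode.left => fun n => Part.some (Nat.unpair n).1
  | OCode.right => fun n => Part.some (Nat.unpair n).2
  | OCode.oracle => fun n => Part.some (g n)
  | OCode.pair cf cg => fun n => Nat.pair <$> OCode.eval g cf n <*> OCode.eval g cg n
  | OCode.comp cf cg => fun n => OCode.eval g cg n >>= OCode.eval g cf
  | OCode.prec cf cg =>
    Nat.unpaired fun a n =>
      n.rec (OCode.eval g cf a) fun y IH => do
        let i ← IH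
        OCode.eval g cg (Nat.pair a (Nat.pair y i))
  | OCode.rfind' cf =>
    Nat.unpaired fun a m =>
      (Nat.rfind fun n => (fun x => x = 0) <$> OCode.eval g cf (Nat.pair a (n + m))).map (· + m)

/-- A standard numbering of oracle codes (adapted from `Nat.Partrec.Code.ofNatCode`). -/
def ofNatOCode : ℕ → OCode
  | 0 => OCode.zero
  | 1 => OCode.succ
  | 2 => OCode.left
  | 3 => OCode.right
  | 4 => OCode.oracle
  | n + 5 =>
    let m := n.div2.div2
    have hm : m < n + 5 := by
      simp only [m, Nat.div2_val]
      exact lt_of_le_of_lt (le_trans (Nat.div_le_self _ _) (Nat.div_le_self _ _))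
        (Nat.lt_succ_of_le (Nat.le_add_right _ 4))
    have m1 : m.unpair.1 < n + 5 := lt_of_le_of_lt m.unpair_left_le hm
    have m2 : m.unpair.2 < n + 5 := lt_of_le_of_lt m.unpair_right_le hm
    match n.bodd, n.div2.bodd with
    | false, false => OCode.pair (ofNatOCode m.unpair.1) (ofNatOCode m.unpair.2)
    | false, true => OCode.comp (ofNatOCode m.unpair.1) (ofNatOCode m.unpair.2)
    | true, false => OCode.prec (ofNatOCode m.unpair.1) (ofNatOCode m.unpair.2)
    | true, true => OCode.rfind' (ofNatOCode m)
decreasing_by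
  all_goals
    first
    | exact m1 | exact m2 | exact hm
    | exact Nat.le_of_lt_succ m1 | exact Nat.le_of_lt_succ m2 | exact Nat.le_of_lt_succ hm

/-- `phi g e` = `Φ_e^g`, the `e`-th partial function relative to the oracle `g`. -/
def phi (g : ℕ → ℕ) (e : ℕ) : ℕ →. ℕ := (ofNatOCode e).eval g

/-- Characteristic function of a set of naturals. -/
noncomputable def chi (A : Set ℕ) : ℕ → ℕ := fun n => if n ∈ A then 1 else 0

/-- `X` computes the total function `f`. -/
def ComputesFun (X : Set ℕ) (f : ℕ → ℕ) : Prop :=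
  RecIn (chi X) fun n => Part.some (f n)

/-- Turing reducibility `A ≤_T B` for sets of naturals. -/
def TLE (A B : Set ℕ) : Prop := ComputesFun B (chi A)

/-- Effective join (recursive join) of two sets. -/
def join (A B : Set ℕ) : Set ℕ :=
  {n | (n % 2 = 0 ∧ n / 2 ∈ A) ∨ (n % 2 = 1 ∧ n / 2 ∈ B)}

/-- The Turing jump of `A`. -/
def jump (A : Set ℕ) : Set ℕ := {e | (phi (chi A) e e).Dom}

/-- The `m`-th iterated Turing jump. -/
def jumpIter : ℕ → Set ℕ → Set ℕ
  | 0, A => A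
  | m + 1, A => jump (jumpIter m A)

/-- A (nonempty) Turing ideal: closed downward under `≤_T` and under join. -/
def TuringIdeal (I : Set (Set ℕ)) : Prop :=
  I.Nonempty ∧ (∀ A ∈ I, ∀ B : Set ℕ, TLE B A → B ∈ I) ∧
    (∀ A ∈ I, ∀ B ∈ I, join A B ∈ I)

/-- `f` is diagonally noncomputable (DNC) over the set `D`. -/
def DNCFun (D : Set ℕ) (f : ℕ → ℕ) : Prop :=
  ∀ e v : ℕ, v ∈ phi (chi D) e e → f e ≠ v

/-- The set `X` is DNC over `D`: `X` computes a DNC function over `D`. -/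
def DNCSet (D X : Set ℕ) : Prop := ∃ f : ℕ → ℕ, ComputesFun X f ∧ DNCFun D f

/-- `g` is `h`-DNC over `D`: DNC over `D` and bounded by `h`. -/
def HDNCFun (h : ℕ → ℕ) (D : Set ℕ) (g : ℕ → ℕ) : Prop :=
  DNCFun D g ∧ ∀ x, g x < h x

/-- The set `X` is `h`-DNC over `D`: `X` computes an `h`-bounded DNC function over `D`. -/
def HDNCSet (h : ℕ → ℕ) (D X : Set ℕ) : Prop :=
  ∃ g : ℕ → ℕ, ComputesFun X g ∧ HDNCFun h D g

/-- `T ⊆ 2^{<ℕ}` is a tree: closed under prefixes. -/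
def IsTree (T : Set (List Bool)) : Prop :=
  ∀ σ ∈ T, ∀ τ : List Bool, τ <+: σ → τ ∈ T

/-- Characteristic function (on codes) of a set of binary strings. -/
noncomputable def treeChi (T : Set (List Bool)) : ℕ → ℕ :=
  fun n => if ∃ σ ∈ T, Encodable.encode σ = n then 1 else 0

/-- `Y ≫ X` : `Y` is of PA degree over `X`, i.e. `Y` computes a path through every
`X`-computable infinite subtree of `2^{<ℕ}`. -/
def PAover (Y X : Set ℕ) : Prop :=
  ∀ T : Set (List Bool), IsTree T → T.Infinite → ComputesFun X (treeChi T) →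
    ∃ f : ℕ → Bool, (∀ n : ℕ, (List.ofFn fun i : Fin n => f i.val) ∈ T) ∧
      ComputesFun Y (fun n => cond (f n) 1 0)

/-- `σ` is an initial segment of the infinite binary sequence `X`. -/
def PrefixOfSeq (σ : List Bool) (X : ℕ → Bool) : Prop :=
  σ = List.ofFn fun i : Fin σ.length => X i.val

/-- The open subset of Cantor space generated by the strings in `S` has measure
at most `2^{-n}`: for each `k`, at most a `2^{-n}` fraction of the length-`k`
strings extend an element of `S`. -/
def MeasureLE (S : Set (List Bool)) (n : ℕ) : Prop :=
  ∀ k : ℕ, Nat.card {τ : Fin k → Bool // ∃ σ ∈ S, σ <+: List.ofFn τ} * 2 ^ n ≤ 2 ^ k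

/-- `W` is computably enumerable in the set `D`. -/
def CEin (D : Set ℕ) (W : Set ℕ) : Prop :=
  ∃ f : ℕ →. ℕ, RecIn (chi D) f ∧ W = f.Dom

/-- `U` is a Martin-Löf test over `D`: a uniformly `Σ⁰₁(D)` sequence of open sets
of Cantor space with `μ(U n) ≤ 2^{-n}`. -/
def MLTest (D : Set ℕ) (U : ℕ → Set (List Bool)) : Prop :=
  CEin D {p : ℕ | ∃ n : ℕ, ∃ σ ∈ U n, p = Nat.pair n (Encodable.encode σ)} ∧
    ∀ n, MeasureLE (U n) n

/-- The infinite binary sequence associated with a set of naturals. -/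
noncomputable def setSeq (A : Set ℕ) : ℕ → Bool := fun n => if n ∈ A then true else false

/-- `R` is 1-random over `D`: `R` passes every Martin-Löf test over `D`. -/
def Random1 (D R : Set ℕ) : Prop :=
  ∀ U : ℕ → Set (List Bool), MLTest D U →
    ∃ n : ℕ, ∀ σ ∈ U n, ¬ PrefixOfSeq σ (setSeq R)

/-- `G` computes a set that is 1-random over `D`. -/
def ComputesRandom (D G : Set ℕ) : Prop := ∃ R : Set ℕ, TLE R G ∧ Random1 D R

/-- `f` dominates `g`: `f n ≥ g n` for all sufficiently large `n`. -/
def Dominates (f g : ℕ → ℕ) : Prop := ∃ N : ℕ, ∀ n ≥ N, g n ≤ f n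

/-- `A =* B` : the symmetric difference of `A` and `B` is finite. -/
def EqStar (A B : Set ℕ) : Prop := ((A \ B) ∪ (B \ A)).Finite

/-!
The colouring `f_e` cuts ℕ into consecutive blocks: the block begun at `n` is closed at the
first stage `M` by which `φ_e(n)` has converged to a value `≤ M`, and the colours are handed out so
that each of them recurs on blocks beginning arbitrarily late. If `φ_e` is total, a set `H` that
(up to finitely many elements) omits a colour of `f_e` must miss infinitely many entire blocks
`(n, M]`, and there the `H`-computable map `n ↦ min {k ∈ H | k > n}` exceeds `M ≥ φ_e(n)`. So this
map escapes every total computable function.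
-/

open Nat.Partrec (Code)
open Nat.Partrec.Code

section RecIn

variable {g : ℕ → ℕ}

theorem RecIn.of_partrec {f : ℕ →. ℕ} (h : Nat.Partrec f) : RecIn g f := by
  induction h with
  | zero => exact RecIn.zero
  | succ => exact RecIn.succ
  | left => exact RecIn.left
  | right => exact RecIn.right
  | pair _ _ ih₁ ih₂ => exact RecIn.pair ih₁ ih₂
  | comp _ _ ih₁ ih₂ => exact RecIn.comp ih₁ ih₂
  | prec _ _ ih₁ ih₂ => exact RecIn.prec ih₁ ih₂
  | rfind _ ih => exact RecIn.rfind ih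

theorem RecIn.of_eq {f f' : ℕ →. ℕ} (h : RecIn g f) (H : ∀ n, f n = f' n) : RecIn g f' :=
  funext H ▸ h

theorem RecIn.of_primrec {f : ℕ → ℕ} (hf : Primrec f) : RecIn g fun n => Part.some (f n) :=
  RecIn.of_partrec (Partrec.nat_iff.1 hf.to_comp)

theorem RecIn.comp_some {f h : ℕ → ℕ} (hf : RecIn g fun n => Part.some (f n))
    (hh : RecIn g fun n => Part.some (h n)) : RecIn g fun n => Part.some (f (h n)) :=
  (RecIn.comp hf hh).of_eq fun _ => Part.bind_some _ _

theorem RecIn.pair_some {f h : ℕ → ℕ} (hf : RecIn g fun n => Part.some (f n))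
    (hh : RecIn g fun n => Part.some (h n)) :
    RecIn g fun n => Part.some (Nat.pair (f n) (h n)) :=
  (RecIn.pair hf hh).of_eq fun n => by simp [Seq.seq]

theorem RecIn.of_primrec_oracle {F : ℕ → ℕ → ℕ} {k : ℕ → ℕ} (hF : Primrec₂ F) (hk : Primrec k) :
    RecIn g fun n => Part.some (F (g (k n)) n) := by
  have hquery : RecIn g fun n => Part.some (g (k n)) :=
    RecIn.comp_some RecIn.oracle (RecIn.of_primrec hk)
  have hF' : Primrec fun z : ℕ => F z.unpair.1 z.unpair.2 :=
    hF.comp (Primrec.fst.comp Primrec.unpair) (Primrec.snd.comp Primrec.unpair)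
  refine (RecIn.comp_some (RecIn.of_primrec hF')
    (RecIn.pair_some hquery (RecIn.of_primrec Primrec.id))).of_eq fun n => ?_
  simp

theorem RecIn.sInf_setOf_eq_zero {t : ℕ → ℕ} (ht : RecIn g fun n => Part.some (t n))
    (hex : ∀ a, ∃ n, t (Nat.pair a n) = 0) :
    RecIn g fun a => Part.some (sInf {n | t (Nat.pair a n) = 0}) := by
  refine (RecIn.rfind ht).of_eq fun a => ?_
  have hne : {n | t (Nat.pair a n) = 0}.Nonempty := hex a
  refine Part.eq_some_iff.2 (Nat.mem_rfind.2 ⟨?_, fun hm => ?_⟩)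
  · simpa using Nat.sInf_mem hne
  · simpa using Nat.notMem_of_lt_sInf hm

end RecIn

section NextIn

variable {H : Set ℕ}

noncomputable def nextIn (H : Set ℕ) (a : ℕ) : ℕ := sInf {k | a < k ∧ k ∈ H}

theorem nextIn_spec (hH : H.Infinite) (a : ℕ) : a < nextIn H a ∧ nextIn H a ∈ H :=
  Nat.sInf_mem ((hH.exists_gt a).imp fun _ hb => hb.symm)

theorem computesFun_nextIn (hH : H.Infinite) : ComputesFun H (nextIn H) := by
  set F : ℕ → ℕ → ℕ := fun v z => if z.unpair.1 < z.unpair.2 ∧ v = 1 then 0 else 1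
  have hF : Primrec₂ F :=
    (Primrec.ite (PrimrecPred.and
      (Primrec.nat_lt.comp (Primrec.fst.comp (Primrec.unpair.comp Primrec.snd))
        (Primrec.snd.comp (Primrec.unpair.comp Primrec.snd)))
      (Primrec.eq.comp Primrec.fst (Primrec.const 1))) (Primrec.const 0) (Primrec.const 1)).to₂
  have hsets : ∀ a, {n | F (chi H (Nat.pair a n).unpair.2) (Nat.pair a n) = 0} =
      {k | a < k ∧ k ∈ H} := fun a => by
    ext k
    by_cases hk : k ∈ H <;> simp [F, chi, hk]
  refine (RecIn.sInf_setOf_eq_zero (RecIn.of_primrec_oracle hF (Primrec.snd.comp Primrec.unpair))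
    fun a => ?_).of_eq fun a => by rw [hsets, nextIn]
  have hmem : nextIn H a ∈ {k | a < k ∧ k ∈ H} := nextIn_spec hH a
  rw [← hsets a] at hmem
  exact ⟨nextIn H a, hmem⟩

end NextIn

section Blocks

variable (closes : ℕ → ℕ → Bool)

/-- `(q, n)`: after stage `x`, `q` blocks have been closed and the current block began at `n`. -/
def blockState : ℕ → ℕ × ℕ
  | 0 => (0, 0)
  | x + 1 =>
    bif closes (blockState x).2 (x + 1) then ((blockState x).1 + 1, x + 1) else blockState x

variable {closes}

theorem blockState_succ_of_closes {x : ℕ} (h : closes (blockState closes x).2 (x + 1) = true) :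
    blockState closes (x + 1) = ((blockState closes x).1 + 1, x + 1) := by
  simp [blockState, h]

theorem blockState_succ_of_not_closes {x : ℕ}
    (h : closes (blockState closes x).2 (x + 1) = false) :
    blockState closes (x + 1) = blockState closes x := by
  simp [blockState, h]

theorem blockState_succ_eq_or (x : ℕ) :
    blockState closes (x + 1) = blockState closes x ∨
      blockState closes (x + 1) = ((blockState closes x).1 + 1, x + 1) := by
  cases h : closes (blockState closes x).2 (x + 1)
  · exact .inl (blockState_succ_of_not_closes h)
  · exact .inr (blockState_succ_of_closes h)

theorem blockState_fst_mono : Monotone fun x => (blockState closes x).1 :=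
  monotone_nat_of_le_succ fun x => by
    rcases blockState_succ_eq_or (closes := closes) x with h | h <;> simp [h]

theorem blockState_snd_le (x : ℕ) : (blockState closes x).2 ≤ x := by
  induction x with
  | zero => rfl
  | succ x ih => rcases blockState_succ_eq_or (closes := closes) x with h | h <;> simp [h]; omega

theorem blockState_fst_le_snd (x : ℕ) : (blockState closes x).1 ≤ (blockState closes x).2 := by
  induction x with
  | zero => rfl
  | succ x ih =>
    have := blockState_snd_le (closes := closes) x
    rcases blockState_succ_eq_or (closes := closes) x with h | h <;> simp [h] <;> omega

theorem blockState_blockState_snd (x : ℕ) :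
    blockState closes (blockState closes x).2 = blockState closes x := by
  induction x with
  | zero => rfl
  | succ x ih =>
    rcases blockState_succ_eq_or (closes := closes) x with h | h
    · rw [h]; exact ih
    · rw [h]; exact h

theorem blockState_eq_of_fst_eq {x y : ℕ} (hxy : x ≤ y)
    (h : (blockState closes y).1 = (blockState closes x).1) :
    blockState closes y = blockState closes x := by
  induction y, hxy using Nat.le_induction with
  | base => rfl
  | succ y hxy ih =>
    have hy : (blockState closes x).1 ≤ (blockState closes y).1 := blockState_fst_mono hxy
    rcases blockState_succ_eq_or (closes := closes) y with h' | h'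
    · rw [h', ih (by rw [h'] at h; omega)]
    · rw [h'] at h; simp only at h; omega

theorem blockState_fst_unbounded (hcloses : ∀ n, ∃ k, ∀ x ≥ k, closes n x = true) (q : ℕ) :
    ∃ x, q ≤ (blockState closes x).1 := by
  induction q with
  | zero => exact ⟨0, le_rfl⟩
  | succ q ih =>
    obtain ⟨y, hy⟩ := ih
    obtain ⟨k, hk⟩ := hcloses (blockState closes y).2
    obtain ⟨x, hyx, hkx⟩ : ∃ x, y ≤ x ∧ k ≤ x := ⟨max y k, le_max_left _ _, le_max_right _ _⟩
    by_cases hx : (blockState closes x).1 = (blockState closes y).1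
    · have hxy := blockState_eq_of_fst_eq hyx hx
      refine ⟨x + 1, ?_⟩
      rw [blockState_succ_of_closes (by rw [hxy]; exact hk _ (by omega)), hxy]
      exact Nat.succ_le_succ hy
    · have : (blockState closes y).1 ≤ (blockState closes x).1 := blockState_fst_mono hyx
      exact ⟨x, by omega⟩

theorem exists_blockState_succ_eq {q y : ℕ} (h : q < (blockState closes y).1) :
    ∃ z, (blockState closes z).1 = q ∧ blockState closes (z + 1) = (q + 1, z + 1) := by
  induction y with
  | zero => simp [blockState] at h
  | succ y ih =>
    by_cases hy : q < (blockState closes y).1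
    · exact ih hy
    · rcases blockState_succ_eq_or (closes := closes) y with h' | h' <;> rw [h'] at h
      · exact absurd h hy
      · have hq : (blockState closes y).1 = q := by simp only at h; omega
        exact ⟨y, hq, by rw [h', hq]⟩

theorem exists_block (hcloses : ∀ n, ∃ k, ∀ x ≥ k, closes n x = true) (q : ℕ) :
    ∃ n z, q ≤ n ∧ closes n (z + 1) = true ∧
      ∀ w, n ≤ w → w ≤ z → (blockState closes w).1 = q := by
  obtain ⟨y, hy⟩ := blockState_fst_unbounded hcloses (q + 1)
  obtain ⟨z, hzq, hz⟩ := exists_blockState_succ_eq (closes := closes) hy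
  refine ⟨(blockState closes z).2, z, hzq ▸ blockState_fst_le_snd z, ?_, fun w hnw hwz => ?_⟩
  · cases h : closes (blockState closes z).2 (z + 1)
    · rw [blockState_succ_of_not_closes h] at hz; simp [hz] at hzq
    · rfl
  · have h₁ := blockState_fst_mono (closes := closes) hnw
    have h₂ := blockState_fst_mono (closes := closes) hwz
    simp only [blockState_blockState_snd] at h₁ h₂
    omega

end Blocks

theorem primrec₂_blockState {α : Type*} [Primcodable α] {closes : α → ℕ → ℕ → Bool}
    (h : Primrec fun p : α × ℕ × ℕ => closes p.1 p.2.1 p.2.2) :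
    Primrec₂ fun a x => blockState (closes a) x := by
  have hstep : Primrec₂ fun (a : α) (p : ℕ × ℕ × ℕ) =>
      bif closes a p.2.2 (p.1 + 1) then (p.2.1 + 1, p.1 + 1) else p.2 :=
    (Primrec.cond
      (h.comp (Primrec.fst.pair ((Primrec.snd.comp (Primrec.snd.comp Primrec.snd)).pair
        (Primrec.succ.comp (Primrec.fst.comp Primrec.snd)))))
      ((Primrec.succ.comp (Primrec.fst.comp (Primrec.snd.comp Primrec.snd))).pair
        (Primrec.succ.comp (Primrec.fst.comp Primrec.snd)))
      (Primrec.snd.comp Primrec.snd)).to₂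
  refine (Primrec.nat_rec (Primrec.const (0, 0)) hstep).of_eq fun a x => ?_
  induction x with
  | zero => rfl
  | succ x ih => simp only [blockState, ← ih]

def convergesWithin (c : Code) (n x : ℕ) : Bool :=
  (evaln x c n).elim false fun v => decide (v ≤ x)

theorem primrec_convergesWithin :
    Primrec fun p : Code × ℕ × ℕ => convergesWithin p.1 p.2.1 p.2.2 := by
  have hev : Primrec fun p : Code × ℕ × ℕ => evaln p.2.2 p.1 p.2.1 :=
    primrec_evaln.comp (((Primrec.snd.comp Primrec.snd).pair Primrec.fst).pair
      (Primrec.fst.comp Primrec.snd))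
  have hle : Primrec₂ fun (p : Code × ℕ × ℕ) (v : ℕ) => decide (v ≤ p.2.2) :=
    (Primrec.nat_le.comp Primrec.snd (Primrec.snd.comp (Primrec.snd.comp Primrec.fst))).decide.to₂
  refine (Primrec.option_casesOn hev (Primrec.const false) hle).of_eq fun p => ?_
  simp only [convergesWithin]
  cases evaln p.2.2 p.1 p.2.1 <;> rfl

theorem convergesWithin_eventually {c : Code} {n v : ℕ} (hv : v ∈ eval c n) :
    ∃ k, ∀ x ≥ k, convergesWithin c n x = true := by
  obtain ⟨k, hk⟩ := evaln_complete.1 hv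
  refine ⟨max k v, fun x hx => ?_⟩
  have hx' : evaln x c n = some v := evaln_mono (le_of_max_le_left hx) hk
  simp [convergesWithin, hx', le_of_max_le_right hx]

theorem le_of_convergesWithin {c : Code} {n v x : ℕ} (hv : v ∈ eval c n)
    (h : convergesWithin c n x = true) : v ≤ x := by
  rcases hx : evaln x c n with _ | w
  · simp [convergesWithin, hx] at h
  · have hw : w ∈ eval c n := evaln_sound hx
    rw [Part.mem_unique hv hw]
    simpa [convergesWithin, hx] using h

/-- Point `x` lies in the block current at stage `x - 1`; the `q`-th block gets colour
`(unpair q).1`, so every colour recurs on blocks beginning arbitrarily late. -/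
def blockColor (c : Code) (x : ℕ) : ℕ :=
  (Nat.unpair (blockState (convergesWithin c) (x - 1)).1).1

theorem primrec₂_blockColor : Primrec₂ blockColor :=
  (Primrec.fst.comp (Primrec.unpair.comp (Primrec.fst.comp
    ((primrec₂_blockState primrec_convergesWithin).comp Primrec.fst
      (Primrec.pred.comp Primrec.snd))))).to₂

theorem blockColor_blocks {c : Code} {φ : ℕ → ℕ} (hφ : ∀ n, φ n ∈ eval c n) (m N : ℕ) :
    ∃ n M, N ≤ n ∧ φ n ≤ M ∧ ∀ x, n < x → x ≤ M → blockColor c x = m := by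
  obtain ⟨n, z, hn, hclose, hblock⟩ :=
    exists_block (fun n => convergesWithin_eventually (hφ n)) (Nat.pair m N)
  refine ⟨n, z + 1, (Nat.right_le_pair m N).trans hn, le_of_convergesWithin (hφ n) hclose,
    fun x hnx hxz => ?_⟩
  rw [blockColor, hblock (x - 1) (by omega) (by omega), Nat.unpair_pair]

theorem EqStar.exists_forall_gt_mem {A B : Set ℕ} (h : EqStar A B) :
    ∃ b, ∀ x ∈ B, b < x → x ∈ A := by
  obtain ⟨b, hb⟩ := (h.subset Set.subset_union_right).bddAbove
  exact ⟨b, fun x hxB hbx => by_contra fun hxA => absurd (hb ⟨hxB, hxA⟩) (not_le.2 hbx)⟩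

/-- Beyond `b`, `H` misses a whole block `(n, M]`, so its next element after `n` exceeds
`M ≥ c n`. -/
theorem not_dominates_nextIn {H : Set ℕ} (hH : H.Infinite) {col c : ℕ → ℕ} {m b : ℕ}
    (hblocks : ∀ N, ∃ n M, N ≤ n ∧ c n ≤ M ∧ ∀ x, n < x → x ≤ M → col x = m)
    (havoid : ∀ x ∈ H, b < x → col x ≠ m) : ¬ Dominates c (nextIn H) := by
  rintro ⟨N, hN⟩
  obtain ⟨n, M, hn, hcM, hcol⟩ := hblocks (max N b)
  obtain ⟨hlt, hmem⟩ := nextIn_spec hH n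
  exact havoid _ hmem (by omega) (hcol _ hlt ((hN n (by omega)).trans hcM))

/-- There is a uniformly computable sequence `⟨f_e⟩` such that every
`Seq*(TS¹)`-solution `H` to `⟨f_e⟩` computes a function `g` not dominated by any
total computable function (hence every solution is of hyperimmune degree). -/
theorem seqTS1_implies_hyperimmune :
    ∃ f : ℕ → ℕ → ℕ, Computable₂ f ∧
      ∀ H : Set ℕ, H.Infinite →
        (∀ e : ℕ, ∃ He : Set ℕ, EqStar He H ∧ (f e) '' He ≠ Set.univ) →
        ∃ g : ℕ → ℕ, ComputesFun H g ∧
          ∀ c : ℕ → ℕ, Computable c → ¬ Dominates c g := by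
  refine ⟨fun e => blockColor (Denumerable.ofNat Code e),
    (primrec₂_blockColor.comp ((Primrec.ofNat Code).comp Primrec.fst) Primrec.snd).to_comp,
    fun H hH hsol => ⟨nextIn H, computesFun_nextIn hH, fun c hc => ?_⟩⟩
  obtain ⟨code, hcode⟩ := exists_code.1 (Partrec.nat_iff.1 hc)
  obtain ⟨He, hHe, hmiss⟩ := hsol (Encodable.encode code)
  obtain ⟨m, hm⟩ := (Set.ne_univ_iff_exists_notMem _).1 hmiss
  obtain ⟨b, hb⟩ := hHe.exists_forall_gt_mem
  simp only [Denumerable.ofNat_encode] at hm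
  exact not_dominates_nextIn hH (blockColor_blocks (fun n => by simp [hcode]) m)
    fun x hx hbx hxm => hm ⟨x, hb x hx hbx, hxm⟩

end IterJump
end

section
/- Let P and Q be instance-solution problems and let W be a weakness property containing the computable sets. If P preserves W and Q does not preserve W, then there exists a Turing ideal I ⊆ W such that every X ∈ I that is an instance of P has a solution Y ∈ I, while some X ∈ I that is an instance of Q has no solution in I. (Hence Q does not hold in every ω-model satisfying P.) -/
namespace IterJump

open scoped Classical

/-- An instance-solution problem `P` preserves the weakness property `W` if for
every `Z ∈ W` and every `Z`-computable instance `X`, some solution `Y ∈ P X`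
satisfies `Z ⊕ Y ∈ W`. -/
def Preserves (P : Set ℕ → Set (Set ℕ)) (W : Set (Set ℕ)) : Prop :=
  ∀ Z ∈ W, ∀ X : Set ℕ, TLE X Z → ∃ Y ∈ P X, join Z Y ∈ W

/-! If `Q` fails to preserve `W`, there are `Z₀ ∈ W` and a `Z₀`-computable `Q`-instance `X₀` such
that `Z₀ ⊕ Y ∉ W` for every solution `Y` of `X₀`. Starting from `Z₀`, build a `≤_T`-chain
`Z₀ ≤_T Z₁ ≤_T ⋯` inside `W`: dovetailing over all pairs `(n, e)`, the stage for `(n, e)` joins to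
the current set a solution, given by preservation, of the `P`-instance computed by the `e`-th
`Z_n`-machine. The sets computable from some `Z_n` form a Turing ideal inside `W` in which every
`P`-instance is solved. It contains `X₀`, but no solution `Y` of `X₀`: from `Y ≤_T Z_n` we would
get `Z₀ ⊕ Y ≤_T Z_n`, hence `Z₀ ⊕ Y ∈ W`. -/

theorem recIn_of_partrec {f : ℕ →. ℕ} (h : Nat.Partrec f) (g : ℕ → ℕ) : RecIn g f := by
  induction h with
  | zero => exact RecIn.zero
  | succ => exact RecIn.succ
  | left => exact RecIn.left
  | right => exact RecIn.right
  | pair _ _ hf hh => exact RecIn.pair hf hh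
  | comp _ _ hf hh => exact RecIn.comp hf hh
  | prec _ _ hf hh => exact RecIn.prec hf hh
  | rfind _ hf => exact RecIn.rfind hf

theorem RecIn.of_recIn_oracle {g h : ℕ → ℕ} (hg : RecIn h fun n => Part.some (g n))
    {f : ℕ →. ℕ} (hf : RecIn g f) : RecIn h f := by
  induction hf with
  | zero => exact RecIn.zero
  | succ => exact RecIn.succ
  | left => exact RecIn.left
  | right => exact RecIn.right
  | oracle => exact hg
  | pair _ _ hf hh => exact RecIn.pair hf hh
  | comp _ _ hf hh => exact RecIn.comp hf hh
  | prec _ _ hf hh => exact RecIn.prec hf hh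
  | rfind _ hf => exact RecIn.rfind hf

theorem RecIn.exists_eval_eq {g : ℕ → ℕ} {f : ℕ →. ℕ} (h : RecIn g f) :
    ∃ c : OCode, c.eval g = f := by
  induction h with
  | zero => exact ⟨OCode.zero, rfl⟩
  | succ => exact ⟨OCode.succ, rfl⟩
  | left => exact ⟨OCode.left, rfl⟩
  | right => exact ⟨OCode.right, rfl⟩
  | oracle => exact ⟨OCode.oracle, rfl⟩
  | pair _ _ hf hh =>
    obtain ⟨cf, rfl⟩ := hf; obtain ⟨ch, rfl⟩ := hh
    exact ⟨OCode.pair cf ch, rfl⟩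
  | comp _ _ hf hh =>
    obtain ⟨cf, rfl⟩ := hf; obtain ⟨ch, rfl⟩ := hh
    exact ⟨OCode.comp cf ch, rfl⟩
  | prec _ _ hf hh =>
    obtain ⟨cf, rfl⟩ := hf; obtain ⟨ch, rfl⟩ := hh
    exact ⟨OCode.prec cf ch, rfl⟩
  | rfind _ hf =>
    obtain ⟨cf, rfl⟩ := hf
    -- `rfind' cf` searches from the offset `m` of its input `⟨a, m⟩`, so feed it `⟨a, 0⟩`.
    refine ⟨OCode.comp (OCode.rfind' cf) (OCode.pair (OCode.pair OCode.left OCode.right)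
      OCode.zero), ?_⟩
    funext n
    simp [OCode.eval, Seq.seq, pure, PFun.pure, Part.map_id']

def encodeOCode : OCode → ℕ
  | OCode.zero => 0
  | OCode.succ => 1
  | OCode.left => 2
  | OCode.right => 3
  | OCode.oracle => 4
  | OCode.pair cf cg => 2 * (2 * Nat.pair (encodeOCode cf) (encodeOCode cg)) + 5
  | OCode.comp cf cg => 2 * (2 * Nat.pair (encodeOCode cf) (encodeOCode cg) + 1) + 5
  | OCode.prec cf cg => (2 * (2 * Nat.pair (encodeOCode cf) (encodeOCode cg)) + 1) + 5
  | OCode.rfind' cf => (2 * (2 * encodeOCode cf + 1) + 1) + 5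

theorem ofNatOCode_encodeOCode (c : OCode) : ofNatOCode (encodeOCode c) = c := by
  induction c <;> simp [encodeOCode, ofNatOCode, Nat.div2_val, *]

theorem exists_phi_eq_of_recIn {g : ℕ → ℕ} {f : ℕ →. ℕ} (h : RecIn g f) : ∃ e, phi g e = f := by
  obtain ⟨c, rfl⟩ := h.exists_eval_eq
  exact ⟨encodeOCode c, by rw [phi, ofNatOCode_encodeOCode]⟩

section ComputesFun

variable {Z A B : Set ℕ} {f h : ℕ → ℕ}

theorem ComputesFun.of_primrec (hf : Nat.Primrec f) : ComputesFun Z f :=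
  recIn_of_partrec (Nat.Partrec.of_primrec hf) _

theorem ComputesFun.comp (hf : ComputesFun Z f) (hh : ComputesFun Z h) :
    ComputesFun Z fun n => f (h n) := by
  simpa [ComputesFun] using RecIn.comp hf hh

theorem ComputesFun.comp₂ {F : ℕ → ℕ → ℕ} (hF : Primrec₂ F) (hf : ComputesFun Z f)
    (hh : ComputesFun Z h) : ComputesFun Z fun n => F (f n) (h n) := by
  have hpair : ComputesFun Z fun n => Nat.pair (f n) (h n) := by
    simpa [ComputesFun, Seq.seq] using RecIn.pair hf hh
  simpa using (ComputesFun.of_primrec (Primrec₂.unpaired'.mpr hF)).comp hpair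

theorem ComputesFun.of_tle (hAB : TLE A B) (hf : ComputesFun A f) : ComputesFun B f :=
  RecIn.of_recIn_oracle hAB hf

theorem tle_refl (A : Set ℕ) : TLE A A := RecIn.oracle

theorem TLE.trans (hAB : TLE A B) (hBZ : TLE B Z) : TLE A Z :=
  ComputesFun.of_tle hBZ hAB

theorem chi_join (A B : Set ℕ) (n : ℕ) :
    chi (join A B) n = if n % 2 = 0 then chi A (n / 2) else chi B (n / 2) := by
  rcases Nat.mod_two_eq_zero_or_one n with h | h <;> simp [chi, join, h]

theorem tle_join_left (A B : Set ℕ) : TLE A (join A B) := by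
  have h : chi A = fun n => chi (join A B) (2 * n) := by
    funext n; simp [chi_join]
  rw [TLE, h]
  exact (tle_refl _).comp (.of_primrec (Primrec.nat_iff.mp
    (Primrec.nat_mul.comp (Primrec.const 2) Primrec.id)))

theorem tle_join_right (A B : Set ℕ) : TLE B (join A B) := by
  have h : chi B = fun n => chi (join A B) (2 * n + 1) := by
    funext n
    have : (2 * n + 1) / 2 = n := by omega
    simp [chi_join, Nat.add_mod, this]
  rw [TLE, h]
  exact (tle_refl _).comp (.of_primrec (Primrec.nat_iff.mp
    (Primrec.succ.comp (Primrec.nat_mul.comp (Primrec.const 2) Primrec.id))))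

theorem join_tle (hA : TLE A Z) (hB : TLE B Z) : TLE (join A B) Z := by
  have half : ComputesFun Z fun n => n / 2 :=
    .of_primrec (Primrec.nat_iff.mp (Primrec.nat_div.comp Primrec.id (Primrec.const 2)))
  have hsel : Primrec₂ fun n p : ℕ => if n % 2 = 0 then p.unpair.1 else p.unpair.2 :=
    Primrec.ite (Primrec.eq.comp (Primrec.nat_mod.comp Primrec.fst (Primrec.const 2))
      (Primrec.const 0)) (Primrec.fst.comp (Primrec.unpair.comp Primrec.snd))
      (Primrec.snd.comp (Primrec.unpair.comp Primrec.snd))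
  have hsplit := ComputesFun.comp₂ hsel (.of_primrec Nat.Primrec.id)
    (ComputesFun.comp₂ Primrec₂.natPair (hA.comp half) (hB.comp half))
  rw [TLE, funext (chi_join A B)]
  simpa using hsplit

end ComputesFun

noncomputable def decodeSet (e : ℕ) (A : Set ℕ) : Set ℕ := {m | 1 ∈ phi (chi A) e m}

theorem exists_decodeSet_eq {X A : Set ℕ} (h : TLE X A) : ∃ e, decodeSet e A = X := by
  obtain ⟨e, he⟩ := exists_phi_eq_of_recIn h
  refine ⟨e, Set.ext fun m => ?_⟩
  by_cases hm : m ∈ X <;> simp [decodeSet, he, chi, hm]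

section SolutionChain

variable (P : Set ℕ → Set (Set ℕ)) (W : Set (Set ℕ)) (Z₀ : Set ℕ)

noncomputable def extendBySolution (X B : Set ℕ) : Set ℕ :=
  if h : ∃ Y ∈ P X, join B Y ∈ W then join B h.choose else B

/-- Stage `s + 1` treats the instance coded by `e` over stage `n`, where `s = ⟨n, e⟩`. -/
noncomputable def solutionChain : ℕ → Set ℕ
  | 0 => Z₀
  | s + 1 => extendBySolution P W (decodeSet s.unpair.2 (solutionChain s.unpair.1))
      (solutionChain s)
decreasing_by
  · exact Nat.lt_succ_of_le (Nat.unpair_left_le s)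
  · exact Nat.lt_succ_self s

theorem solutionChain_zero : solutionChain P W Z₀ 0 = Z₀ := by
  rw [solutionChain]

theorem solutionChain_succ (s : ℕ) :
    solutionChain P W Z₀ (s + 1) = extendBySolution P W
      (decodeSet s.unpair.2 (solutionChain P W Z₀ s.unpair.1)) (solutionChain P W Z₀ s) := by
  rw [solutionChain]

variable {P W Z₀}

theorem solutionChain_mem (hZ₀ : Z₀ ∈ W) (s : ℕ) : solutionChain P W Z₀ s ∈ W := by
  induction s with
  | zero => rwa [solutionChain_zero]
  | succ s ih =>
    rw [solutionChain_succ, extendBySolution]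
    split_ifs with h
    exacts [h.choose_spec.2, ih]

theorem tle_solutionChain_succ (s : ℕ) :
    TLE (solutionChain P W Z₀ s) (solutionChain P W Z₀ (s + 1)) := by
  rw [solutionChain_succ, extendBySolution]
  split_ifs
  exacts [tle_join_left _ _, tle_refl _]

theorem tle_solutionChain_of_le {m n : ℕ} (h : m ≤ n) :
    TLE (solutionChain P W Z₀ m) (solutionChain P W Z₀ n) := by
  induction h with
  | refl => exact tle_refl _
  | step _ ih => exact ih.trans (tle_solutionChain_succ _)

theorem exists_solution_tle_solutionChain (hP : Preserves P W) (hZ₀ : Z₀ ∈ W) {X : Set ℕ}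
    {n : ℕ} (hX : TLE X (solutionChain P W Z₀ n)) :
    ∃ Y ∈ P X, ∃ m, TLE Y (solutionChain P W Z₀ m) := by
  obtain ⟨e, he⟩ := exists_decodeSet_eq hX
  set s := Nat.pair n e
  have hXs : TLE X (solutionChain P W Z₀ s) :=
    hX.trans (tle_solutionChain_of_le (Nat.left_le_pair n e))
  obtain ⟨Y, hY, hYW⟩ := hP _ (solutionChain_mem hZ₀ s) X hXs
  have hsol : ∃ Y ∈ P X, join (solutionChain P W Z₀ s) Y ∈ W := ⟨Y, hY, hYW⟩
  have hstep : solutionChain P W Z₀ (s + 1) = join (solutionChain P W Z₀ s) hsol.choose := by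
    rw [solutionChain_succ, Nat.unpair_pair, he, extendBySolution, dif_pos hsol]
  exact ⟨hsol.choose, hsol.choose_spec.1, s + 1, hstep ▸ tle_join_right _ _⟩

end SolutionChain

def chainIdeal (Z : ℕ → Set ℕ) : Set (Set ℕ) := {V | ∃ n, TLE V (Z n)}

theorem turingIdeal_chainIdeal {Z : ℕ → Set ℕ} (hZ : ∀ {m n}, m ≤ n → TLE (Z m) (Z n)) :
    TuringIdeal (chainIdeal Z) := by
  refine ⟨⟨Z 0, 0, tle_refl _⟩, fun A ⟨n, hA⟩ B hB => ⟨n, hB.trans hA⟩, ?_⟩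
  rintro A ⟨m, hA⟩ B ⟨n, hB⟩
  exact ⟨max m n, join_tle (hA.trans (hZ (le_max_left m n))) (hB.trans (hZ (le_max_right m n)))⟩

theorem preservation_separation_general (P Q : Set ℕ → Set (Set ℕ)) (W : Set (Set ℕ))
    (hWdown : ∀ A ∈ W, ∀ B : Set ℕ, TLE B A → B ∈ W)
    (hP : Preserves P W) (hQ : ¬ Preserves Q W) :
    ∃ I : Set (Set ℕ), TuringIdeal I ∧ I ⊆ W ∧
      (∀ X ∈ I, ∃ Y ∈ P X, Y ∈ I) ∧
      (∃ X ∈ I, ∀ Y ∈ Q X, Y ∉ I) := by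
  obtain ⟨Z₀, hZ₀, X₀, hX₀, hX₀bad⟩ :
      ∃ Z₀ ∈ W, ∃ X₀, TLE X₀ Z₀ ∧ ∀ Y ∈ Q X₀, join Z₀ Y ∉ W := by
    simpa [Preserves] using hQ
  have hmono {m n : ℕ} (h : m ≤ n) : TLE (solutionChain P W Z₀ m) (solutionChain P W Z₀ n) :=
    tle_solutionChain_of_le h
  have hZ₀le (n : ℕ) : TLE Z₀ (solutionChain P W Z₀ n) := by
    simpa [solutionChain_zero] using hmono (Nat.zero_le n)
  have hmemW {V : Set ℕ} {n : ℕ} (hV : TLE V (solutionChain P W Z₀ n)) : V ∈ W :=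
    hWdown _ (solutionChain_mem hZ₀ n) _ hV
  refine ⟨chainIdeal (solutionChain P W Z₀), turingIdeal_chainIdeal hmono,
    fun V ⟨_, hV⟩ => hmemW hV, fun X ⟨_, hX⟩ => exists_solution_tle_solutionChain hP hZ₀ hX,
    X₀, ⟨0, hX₀.trans (hZ₀le 0)⟩, ?_⟩
  rintro Y hY ⟨n, hYn⟩
  exact hX₀bad Y hY (hmemW (join_tle (hZ₀le n) hYn))

/-- if `P` preserves the weakness property `W` (which contains the
computable sets) and `Q` does not, then some ω-model (Turing ideal) within `W`
solves all `P`-instances but fails to solve some `Q`-instance. -/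
theorem preservation_separation (P Q : Set ℕ → Set (Set ℕ)) (W : Set (Set ℕ))
    (hWdown : ∀ A ∈ W, ∀ B : Set ℕ, TLE B A → B ∈ W)
    (hWcomp : ∀ A : Set ℕ, TLE A ∅ → A ∈ W)
    (hP : Preserves P W) (hQ : ¬ Preserves Q W) :
    ∃ I : Set (Set ℕ), TuringIdeal I ∧ I ⊆ W ∧
      (∀ X ∈ I, ∃ Y ∈ P X, Y ∈ I) ∧
      (∃ X ∈ I, ∀ Y ∈ Q X, Y ∉ I) :=
  preservation_separation_general P Q W hWdown hP hQ

end IterJump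
end
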